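/- arXiv:math/9904162 — 4 statements merged into one kernel-verified Lean document; each statement's English description precedes it below -/
import Mathlib

section
/- For all positive integers m and n and all t ∈ [0,1], g_m(g_n(t)) = g_{mn}(t). -/
open Set

noncomputable def vmap (t : ℝ) : ℝ :=
  if Even ⌊t⌋ then t - ⌊t⌋ else ⌊t⌋ + 1 - t

noncomputable def gmap (n : ℕ) (t : ℝ) : ℝ := vmap (n * t)

def Knaster (n : ℕ → ℕ) : Set (ℕ → ℝ) :=
  {x | (∀ j, x j ∈ Icc (0:ℝ) 1) ∧ ∀ j, x j = gmap (n j) (x (j + 1))}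

lemma vmap_add_two_int (t : ℝ) (z : ℤ) : vmap (t + 2 * z) = vmap t := by
  unfold vmap
  have hf : ⌊t + 2 * (z:ℝ)⌋ = ⌊t⌋ + 2 * z := by
    rw [show t + 2 * (z:ℝ) = t + ((2*z : ℤ) : ℝ) by push_cast; ring, Int.floor_add_intCast]
  rw [hf]
  have hp : Even (⌊t⌋ + 2 * z) ↔ Even ⌊t⌋ := by
    simp [Int.even_add]
  by_cases h : Even ⌊t⌋
  · rw [if_pos (hp.mpr h), if_pos h]; push_cast; ring
  · rw [if_neg (fun hh => h (hp.mp hh)), if_neg h]; push_cast; ring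

lemma vmap_neg (t : ℝ) : vmap (-t) = vmap t := by
  unfold vmap
  rcases eq_or_ne (Int.fract t) 0 with hf | hf
  · have ht : ((⌊t⌋ : ℝ)) = t := by
      have := Int.fract_add_floor t
      rw [hf] at this; linarith
    have hneg : ⌊-t⌋ = -⌊t⌋ := by
      rw [show -t = ((-⌊t⌋ : ℤ) : ℝ) by push_cast; linarith, Int.floor_intCast]
    rw [hneg]
    have hp : Even (-⌊t⌋) ↔ Even ⌊t⌋ := by simp
    by_cases h : Even ⌊t⌋
    · rw [if_pos (hp.mpr h), if_pos h]; push_cast; linarith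
    · rw [if_neg (fun hh => h (hp.mp hh)), if_neg h]; push_cast; linarith
  · have hc : ((⌈t⌉ : ℤ) : ℝ) = ((⌊t⌋ : ℤ) : ℝ) + 1 := by
      rw [Int.ceil_eq_add_one_sub_fract hf]
      have := Int.fract_add_floor t
      linarith
    have hceil : ⌈t⌉ = ⌊t⌋ + 1 := by exact_mod_cast hc
    have hneg : ⌊-t⌋ = -⌊t⌋ - 1 := by
      rw [Int.floor_neg, hceil]; ring
    rw [hneg]
    have hp : Even (-⌊t⌋ - 1) ↔ ¬ Even ⌊t⌋ := by
      simp only [Int.even_iff]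
      omega
    by_cases h : Even ⌊t⌋
    · rw [if_neg (fun hh => (hp.mp hh) h), if_pos h]; push_cast; ring
    · rw [if_pos (hp.mpr h), if_neg h]; push_cast; ring

theorem gmap_comp (m n : ℕ) (hm : 0 < m) (hn : 0 < n) :
    ∀ t ∈ Set.Icc (0:ℝ) 1, gmap m (gmap n t) = gmap (m * n) t := by
  intro t _
  unfold gmap
  set s : ℝ := (n : ℝ) * t with hs
  by_cases h : Even ⌊s⌋
  · obtain ⟨c, hc⟩ := h
    have hv : vmap s = s - (c : ℝ) - (c : ℝ) := by
      unfold vmap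
      rw [if_pos ⟨c, hc⟩, hc]; push_cast; ring
    have : (m : ℝ) * vmap s = (↑(m * n) : ℝ) * t + 2 * ((-(m * c) : ℤ) : ℝ) := by
      rw [hv, hs]; push_cast; ring
    rw [this, vmap_add_two_int]
  · have hodd : Odd ⌊s⌋ := Int.not_even_iff_odd.mp h
    obtain ⟨c, hc⟩ := hodd
    have hv : vmap s = (⌊s⌋ : ℝ) + 1 - s := by
      unfold vmap; rw [if_neg h]
    have : (m : ℝ) * vmap s = -((↑(m * n) : ℝ) * t) + 2 * ((m * (c + 1) : ℤ) : ℝ) := by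
      rw [hv, hc, hs]; push_cast; ring
    rw [this, vmap_add_two_int, vmap_neg]
end

section
/- For all positive integers m and n, the maps g_m and g_n commute: g_m ∘ g_n = g_n ∘ g_m on [0,1]. -/
open Set

/-
The sawtooth `vmap` is even and 2-periodic, and on each interval `[k, k + 1]` it equals `t - 2j` or
`2j - t` for an integer `j`. Hence `m * vmap t ≡ ± m * t (mod 2)` for every integer `m`, so
`vmap (m * vmap t) = vmap (m * t)`. Thus `gmap m ∘ gmap n = gmap (m * n)`, which is symmetric in `m`
and `n`.
-/

lemma vmap_add_two_mul_intCast (t : ℝ) (k : ℤ) : vmap (t + 2 * k) = vmap t := by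
  have hfloor : ⌊t + 2 * (k : ℝ)⌋ = ⌊t⌋ + 2 * k := by
    exact_mod_cast Int.floor_add_intCast t (2 * k)
  have hparity : Even (⌊t⌋ + 2 * k) ↔ Even ⌊t⌋ := by
    simp [Int.even_add, parity_simps]
  unfold vmap
  rw [hfloor]
  split_ifs <;> first | tauto | (push_cast; ring)

lemma vmap_intCast_mul_vmap (m : ℤ) (t : ℝ) : vmap (m * vmap t) = vmap (m * t) := by
  by_cases h : Even ⌊t⌋
  · obtain ⟨k, hk⟩ := h
    have hshift : (m : ℝ) * vmap t = m * t + 2 * ((-(m * k) : ℤ) : ℝ) := by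
      rw [vmap, if_pos ⟨k, hk⟩, hk]
      push_cast; ring
    rw [hshift, vmap_add_two_mul_intCast]
  · obtain ⟨k, hk⟩ := Int.not_even_iff_odd.mp h
    have hshift : (m : ℝ) * vmap t = -(m * t) + 2 * ((m * (k + 1) : ℤ) : ℝ) := by
      rw [vmap, if_neg h, hk]
      push_cast; ring
    rw [hshift, vmap_add_two_mul_intCast, vmap_neg]

lemma gmap_gmap (m n : ℕ) (t : ℝ) : gmap m (gmap n t) = gmap (m * n) t := by
  simpa [gmap, mul_assoc] using vmap_intCast_mul_vmap m (n * t)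

theorem gmap_commute_general (m n : ℕ) :
    ∀ t ∈ Set.Icc (0:ℝ) 1, gmap m (gmap n t) = gmap n (gmap m t) := by
  intro t _
  rw [gmap_gmap, gmap_gmap, mul_comm]

theorem gmap_commute (m n : ℕ) (hm : 0 < m) (hn : 0 < n) :
    ∀ t ∈ Set.Icc (0:ℝ) 1, gmap m (gmap n t) = gmap n (gmap m t) :=
  gmap_commute_general m n
end

section
/- Let m, n, q be positive integers with (m+2)·q ≤ n, let i be an integer with 0 ≤ i ≤ q−1, and let f₀ : [0,1] → [0,1] be a continuous surjection. Then there exists a continuous map f₁ : [0,1] → [0,1] such that: (1) f₁(0) = 0 whenever f₀(0) = 0; (2) f₀ ∘ g_n = g_m ∘ f₁; (3) f₁([0, i/q]) ⊆ [0, 1/m]; (4) f₁([i/q, (i+1)/q]) = [0,1]; and (5) f₁([(i+1)/q, 1]) ⊆ [(m−1)/m, 1]. -/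
/-!
Put `F = f₀ ∘ g_n`. A block of `m + 1` consecutive intervals `[j/n, (j+1)/n]` fits inside
`[i/q, (i+1)/q]`, and `g_n` maps each of them onto `[0, 1]`, so the surjectivity of `f₀` gives
turning points `p₀ ≤ p₁ ≤ ⋯ ≤ p_m` there with `F p_r = 0` for even `r` and `F p_r = 1` for
odd `r`. On `[p_r, p_{r+1}]` (the outermost points pushed to `0` and `1`) we lift `F` through the
`r`-th monotone branch of `g_m`, whose image is `[r/m, (r+1)/m]`. Consecutive branches meet at
the turning points, so the lift `f₁` is continuous, runs from `0` at `p₀` to `1` at `p_m`, and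
stays in the first, resp. last, branch to the left of `p₀`, resp. right of `p_m`.
-/

open Set

namespace Folding

def fold (k : ℤ) (s : ℝ) : ℝ := if Even k then s else 1 - s

lemma fold_fold (k : ℤ) (s : ℝ) : fold k (fold k s) = s := by
  unfold fold; split_ifs <;> ring

lemma fold_one_sub (k : ℤ) (s : ℝ) : fold k (1 - s) = 1 - fold k s := by
  unfold fold; split_ifs <;> ring

lemma fold_add_one (k : ℤ) (s : ℝ) : fold (k + 1) s = 1 - fold k s := by
  simp only [fold, Int.even_add_one]; split_ifs <;> ring

lemma fold_fold_add_one (k : ℤ) (s : ℝ) : fold k (fold (k + 1) s) = 1 - s := by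
  rw [fold_add_one, fold_one_sub, fold_fold]

lemma fold_mem_Icc (k : ℤ) {s : ℝ} (hs : s ∈ Icc (0 : ℝ) 1) :
    fold k s ∈ Icc (0 : ℝ) 1 := by
  unfold fold; split_ifs
  · exact hs
  · constructor <;> linarith [hs.1, hs.2]

lemma continuous_fold (k : ℤ) : Continuous (fold k) := by
  unfold fold; split_ifs <;> fun_prop

lemma vmap_mem_Icc (t : ℝ) : vmap t ∈ Icc (0 : ℝ) 1 := by
  have := Int.floor_le t
  have := Int.lt_floor_add_one t
  unfold vmap; split_ifs <;> constructor <;> linarith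

lemma vmap_intCast_add (k : ℤ) {s : ℝ} (hs : s ∈ Icc (0 : ℝ) 1) :
    vmap (k + s) = fold k s := by
  rcases hs.2.lt_or_eq with hs1 | rfl
  · have hfloor : ⌊(k : ℝ) + s⌋ = k := by
      rw [Int.floor_eq_iff]; constructor <;> linarith [hs.1]
    simp only [vmap, fold, hfloor]; split_ifs <;> ring
  · have hfloor : ⌊(k : ℝ) + 1⌋ = k + 1 := by exact_mod_cast Int.floor_intCast (k + 1)
    simp only [vmap, fold, hfloor, Int.even_add_one]; split_ifs <;> push_cast <;> ring

lemma vmap_natCast_add (k : ℕ) {s : ℝ} (hs : s ∈ Icc (0 : ℝ) 1) :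
    vmap (k + s) = fold k s := by
  exact_mod_cast vmap_intCast_add k hs

lemma continuous_vmap : Continuous vmap := by
  refine LocallyFinite.continuous (f := fun k : ℤ => Icc (k : ℝ) (k + 1)) ?_
    (iUnion_Icc_intCast ℝ) (fun _ => isClosed_Icc) fun k => ?_
  · exact locallyFinite_Icc_of_tendsto (tendsto_intCast_atTop_iff.2 Filter.tendsto_id)
      (Filter.tendsto_atBot_add_const_right _ _ (tendsto_intCast_atBot_iff.2 Filter.tendsto_id))
  · have : ContinuousOn (fun t => fold k (t - k)) (Icc (k : ℝ) (k + 1)) :=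
      ((continuous_fold k).comp (continuous_sub_right _)).continuousOn
    refine this.congr fun t ht => ?_
    have := vmap_intCast_add k (s := t - k) ⟨by linarith [ht.1], by linarith [ht.2]⟩
    simpa using this

lemma continuous_gmap (n : ℕ) : Continuous (gmap n) :=
  continuous_vmap.comp (continuous_const_mul _)

lemma gmap_zero (n : ℕ) : gmap n 0 = 0 := by
  simpa [gmap, fold] using vmap_natCast_add 0 (s := 0) (by simp)

noncomputable def branch (m k : ℕ) (s : ℝ) : ℝ := (k + fold k s) / m

lemma gmap_branch {m : ℕ} (hm : m ≠ 0) (k : ℕ) {s : ℝ} (hs : s ∈ Icc (0 : ℝ) 1) :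
    gmap m (branch m k s) = s := by
  rw [gmap, branch, mul_div_cancel₀ _ (by exact_mod_cast hm),
    vmap_natCast_add k (fold_mem_Icc k hs), fold_fold]

lemma branch_mem_Icc {m : ℕ} (hm : 0 < m) (k : ℕ) {s : ℝ} (hs : s ∈ Icc (0 : ℝ) 1) :
    branch m k s ∈ Icc ((k : ℝ) / m) ((k + 1) / m) := by
  unfold branch
  have := fold_mem_Icc k hs
  constructor <;> gcongr <;> linarith [this.1, this.2]

lemma exists_gmap_eq {n : ℕ} (hn : 0 < n) (j : ℕ) {x : ℝ} (hx : x ∈ Icc (0 : ℝ) 1) :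
    ∃ t ∈ Icc ((j : ℝ) / n) ((j + 1) / n), gmap n t = x :=
  ⟨_, branch_mem_Icc hn j hx, gmap_branch hn.ne' j hx⟩

section Lift

variable {m : ℕ} {P : ℕ → ℝ} {F : ℝ → ℝ}

/- Clamping `t` to `[P j, P (j + 1)]` freezes the `j`-th summand at `1` to the right of that
interval and at `0` to its left, so the sum glues the branches `branch m r (F t)`. -/
noncomputable def gmapLift (m : ℕ) (P : ℕ → ℝ) (F : ℝ → ℝ) (t : ℝ) : ℝ :=
  (∑ j ∈ Finset.range m, fold j (F (max (P j) (min (P (j + 1)) t)))) / m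

lemma gmapLift_eq (hP : Monotone P) (hF : ∀ j, 0 < j → j < m → F (P j) = fold j 0)
    {r : ℕ} (hr : r < m) {t : ℝ} (ht : t ∈ Icc (P r) (P (r + 1))) :
    gmapLift m P F t = branch m r (F t) := by
  have below : ∀ j ∈ Finset.range r, fold j (F (max (P j) (min (P (j + 1)) t))) = 1 := by
    intro j hj
    have hj := Finset.mem_range.1 hj
    have hle : P (j + 1) ≤ t := (hP (by omega : j + 1 ≤ r)).trans ht.1
    rw [min_eq_left hle, max_eq_right (hP j.le_succ), hF (j + 1) j.succ_pos (by omega),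
      Nat.cast_succ, fold_fold_add_one, sub_zero]
  have above : ∀ j ∈ Finset.Ico (r + 1) m,
      fold j (F (max (P j) (min (P (j + 1)) t))) = 0 := by
    intro j hj
    have hj := Finset.mem_Ico.1 hj
    have hle : t ≤ P j := ht.2.trans (hP hj.1)
    rw [min_eq_right (hle.trans (hP j.le_succ)), max_eq_left hle, hF j (by omega) hj.2,
      fold_fold]
  have middle : max (P r) (min (P (r + 1)) t) = t := by
    rw [min_eq_right ht.2, max_eq_right ht.1]
  rw [gmapLift, ← Finset.sum_range_add_sum_Ico _ hr.le, Finset.sum_eq_sum_Ico_succ_bot hr,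
    Finset.sum_congr rfl below, Finset.sum_congr rfl above, middle, branch]
  simp

lemma continuousOn_gmapLift {a b : ℝ} (hF : ContinuousOn F (Icc a b))
    (hP : ∀ j ≤ m, P j ∈ Icc a b) : ContinuousOn (gmapLift m P F) (Icc a b) := by
  refine (continuousOn_finsetSum _ fun j hj => ?_).div_const _
  have hj := Finset.mem_range.1 hj
  have hclamp : MapsTo (fun t => max (P j) (min (P (j + 1)) t)) (Icc a b) (Icc a b) :=
    fun t ht => ⟨(hP j hj.le).1.trans (le_max_left _ _),
      max_le (hP j hj.le).2 ((min_le_left _ _).trans (hP (j + 1) hj).2)⟩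
  exact (continuous_fold j).comp_continuousOn (hF.comp (by fun_prop) hclamp)

lemma exists_mem_Icc_succ (hm : 0 < m) {t : ℝ} (ht : t ∈ Icc (P 0) (P m)) :
    ∃ r < m, t ∈ Icc (P r) (P (r + 1)) := by
  induction m with
  | zero => exact absurd hm (lt_irrefl 0)
  | succ m ih =>
    by_cases h : 0 < m ∧ t ≤ P m
    · obtain ⟨r, hr, hrt⟩ := ih h.1 ⟨ht.1, h.2⟩
      exact ⟨r, hr.trans m.lt_succ_self, hrt⟩
    · refine ⟨m, m.lt_succ_self, ?_, ht.2⟩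
      rcases Nat.eq_zero_or_pos m with rfl | hm
      · exact ht.1
      · exact (not_le.1 fun h' => h ⟨hm, h'⟩).le

lemma gmapLift_mem_Icc_div (hm : 0 < m) (hP : Monotone P)
    (hF : ∀ j, 0 < j → j < m → F (P j) = fold j 0) {r : ℕ} (hr : r < m) {t : ℝ}
    (ht : t ∈ Icc (P r) (P (r + 1))) (hFt : F t ∈ Icc (0 : ℝ) 1) :
    gmapLift m P F t ∈ Icc ((r : ℝ) / m) ((r + 1) / m) :=
  gmapLift_eq hP hF hr ht ▸ branch_mem_Icc hm r hFt

lemma gmapLift_mem_Icc (hm : 0 < m) (hP : Monotone P)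
    (hF : ∀ j, 0 < j → j < m → F (P j) = fold j 0) {t : ℝ} (ht : t ∈ Icc (P 0) (P m))
    (hFt : F t ∈ Icc (0 : ℝ) 1) : gmapLift m P F t ∈ Icc (0 : ℝ) 1 := by
  obtain ⟨r, hr, hrt⟩ := exists_mem_Icc_succ hm ht
  have hr' : (r : ℝ) + 1 ≤ m := by exact_mod_cast hr
  exact Icc_subset_Icc (by positivity) (div_le_one_of_le₀ hr' (by positivity))
    (gmapLift_mem_Icc_div hm hP hF hr hrt hFt)

lemma gmap_gmapLift (hm : 0 < m) (hP : Monotone P)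
    (hF : ∀ j, 0 < j → j < m → F (P j) = fold j 0) {t : ℝ} (ht : t ∈ Icc (P 0) (P m))
    (hFt : F t ∈ Icc (0 : ℝ) 1) : gmap m (gmapLift m P F t) = F t := by
  obtain ⟨r, hr, hrt⟩ := exists_mem_Icc_succ hm ht
  rw [gmapLift_eq hP hF hr hrt, gmap_branch hm.ne' r hFt]

end Lift

section WithEnds

variable {k : ℕ} {p : ℕ → ℝ}

def withEnds (k : ℕ) (p : ℕ → ℝ) (r : ℕ) : ℝ :=
  if r = 0 then 0 else if r ≤ k then p r else 1

lemma withEnds_zero : withEnds k p 0 = 0 := rfl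

lemma withEnds_add_one_self : withEnds k p (k + 1) = 1 := by simp [withEnds]

lemma withEnds_of_pos_of_le {j : ℕ} (h₀ : 0 < j) (hj : j ≤ k) : withEnds k p j = p j := by
  simp [withEnds, h₀.ne', hj]

lemma withEnds_mem_Icc (hp : Monotone p) (hp₀ : 0 ≤ p 0) (hp₁ : p (k + 1) ≤ 1) (j : ℕ) :
    withEnds k p j ∈ Icc (0 : ℝ) 1 := by
  unfold withEnds
  split_ifs with _ hj
  · simp
  · exact ⟨hp₀.trans (hp j.zero_le), (hp (hj.trans k.le_succ)).trans hp₁⟩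
  · simp

lemma monotone_withEnds (hp : Monotone p) (hp₀ : 0 ≤ p 0) (hp₁ : p (k + 1) ≤ 1) :
    Monotone (withEnds k p) := by
  refine monotone_nat_of_le_succ fun r => ?_
  have h₀ := (withEnds_mem_Icc hp hp₀ hp₁ (r + 1)).1
  have h₁ := (withEnds_mem_Icc hp hp₀ hp₁ r).2
  rcases Nat.eq_zero_or_pos r with rfl | hr
  · exact h₀
  by_cases hrk : r + 1 ≤ k
  · rw [withEnds_of_pos_of_le hr (by omega), withEnds_of_pos_of_le r.succ_pos hrk]
    exact hp r.le_succ
  · exact h₁.trans_eq (by simp [withEnds, hrk])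

lemma le_withEnds_one (hp : Monotone p) (hp₁ : p (k + 1) ≤ 1) : p 0 ≤ withEnds k p 1 := by
  rw [withEnds, if_neg one_ne_zero]
  split_ifs
  · exact hp zero_le_one
  · exact (hp (Nat.zero_le _)).trans hp₁

lemma withEnds_self_le (hp : Monotone p) (hp₀ : 0 ≤ p 0) : withEnds k p k ≤ p (k + 1) := by
  unfold withEnds
  split_ifs
  · exact hp₀.trans (hp (Nat.zero_le _))
  · exact hp k.le_succ
  · omega

end WithEnds

lemma exists_gmap_lift {m : ℕ} (hm : 0 < m) {F : ℝ → ℝ} (hFc : ContinuousOn F (Icc 0 1))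
    (hFm : MapsTo F (Icc 0 1) (Icc 0 1)) {p : ℕ → ℝ} (hp : Monotone p) (hp₀ : 0 ≤ p 0)
    (hp₁ : p m ≤ 1) (hFp : ∀ r, F (p r) = fold r 0) :
    ∃ f₁ : ℝ → ℝ, ContinuousOn f₁ (Icc 0 1) ∧ MapsTo f₁ (Icc 0 1) (Icc 0 1) ∧
      (F 0 = 0 → f₁ 0 = 0) ∧ (∀ t ∈ Icc (0 : ℝ) 1, F t = gmap m (f₁ t)) ∧
      f₁ '' Icc 0 (p 0) ⊆ Icc 0 (1 / m) ∧ f₁ '' Icc (p 0) (p m) = Icc 0 1 ∧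
      f₁ '' Icc (p m) 1 ⊆ Icc ((m - 1) / m) 1 := by
  obtain ⟨k, rfl⟩ : ∃ k, m = k + 1 := Nat.exists_eq_add_one.2 hm
  have hP_Icc := withEnds_mem_Icc hp hp₀ hp₁
  have hP := monotone_withEnds hp hp₀ hp₁
  have hP₀ : withEnds k p 0 = 0 := withEnds_zero
  have hPm : withEnds k p (k + 1) = 1 := withEnds_add_one_self
  have hFP : ∀ j, 0 < j → j < k + 1 → F (withEnds k p j) = fold j 0 := fun j h₀ hj => by
    rw [withEnds_of_pos_of_le h₀ (Nat.lt_succ_iff.1 hj), hFp]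
  have hp₀_mem : p 0 ∈ Icc (withEnds k p 0) (withEnds k p 1) :=
    ⟨hp₀, le_withEnds_one hp hp₁⟩
  have hp₁_mem : p (k + 1) ∈ Icc (withEnds k p k) (withEnds k p (k + 1)) :=
    ⟨withEnds_self_le hp hp₀, hPm ▸ hp₁⟩
  generalize withEnds k p = P at *
  set f₁ := gmapLift (k + 1) P F
  have hf₁ {r t} (hr : r < k + 1) (hrt : t ∈ Icc (P r) (P (r + 1))) :
      f₁ t = branch (k + 1) r (F t) :=
    gmapLift_eq hP hFP hr hrt
  have hI : Icc (0 : ℝ) 1 = Icc (P 0) (P (k + 1)) := by rw [hP₀, hPm]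
  have hmaps : MapsTo f₁ (Icc 0 1) (Icc 0 1) := fun t ht =>
    gmapLift_mem_Icc hm hP hFP (hI ▸ ht) (hFm ht)
  have hcont : ContinuousOn f₁ (Icc 0 1) := continuousOn_gmapLift hFc fun j _ => hP_Icc j
  have hf₁_p₀ : f₁ (p 0) = 0 := by simp [hf₁ hm hp₀_mem, hFp, fold_fold, branch]
  have hf₁_p₁ : f₁ (p (k + 1)) = 1 := by
    rw [hf₁ k.lt_succ_self hp₁_mem, hFp, branch]
    push_cast
    rw [fold_fold_add_one, sub_zero, div_self (by positivity)]
  refine ⟨f₁, hcont, hmaps, fun hF0 => ?_, fun t ht => ?_, ?_, ?_, ?_⟩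
  · simp [hf₁ hm ⟨hP₀.le, (hP_Icc 1).1⟩, hF0, fold, branch]
  · exact (gmap_gmapLift hm hP hFP (hI ▸ ht) (hFm ht)).symm
  · rintro _ ⟨t, ht, rfl⟩
    have ht₁ : t ∈ Icc (0 : ℝ) 1 := ⟨ht.1, ht.2.trans (hp₀_mem.2.trans (hP_Icc 1).2)⟩
    simpa using gmapLift_mem_Icc_div hm hP hFP hm ⟨hP₀ ▸ ht.1, ht.2.trans hp₀_mem.2⟩ (hFm ht₁)
  · refine (hmaps.mono_left (Icc_subset_Icc hp₀ hp₁)).image_subset.antisymm ?_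
    have := intermediate_value_Icc (hp (k + 1).zero_le) (hcont.mono (Icc_subset_Icc hp₀ hp₁))
    rwa [hf₁_p₀, hf₁_p₁] at this
  · rintro _ ⟨t, ht, rfl⟩
    have ht₁ : t ∈ Icc (0 : ℝ) 1 := ⟨(hp₀.trans (hp (Nat.zero_le _))).trans ht.1, ht.2⟩
    have := gmapLift_mem_Icc_div hm hP hFP k.lt_succ_self
      ⟨hp₁_mem.1.trans ht.1, hPm ▸ ht.2⟩ (hFm ht₁)
    push_cast at this ⊢
    simpa [div_self (by positivity : (k : ℝ) + 1 ≠ 0)] using this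

lemma exists_turning_points {n : ℕ} (hn : 0 < n) {f₀ : ℝ → ℝ}
    (hf₀ : Icc (0 : ℝ) 1 ⊆ f₀ '' Icc 0 1) (k : ℕ) :
    ∃ p : ℕ → ℝ, Monotone p ∧
      (∀ r, p r ∈ Icc (((k + r : ℕ) : ℝ) / n) (((k + r : ℕ) + 1) / n)) ∧
      ∀ r, f₀ (gmap n (p r)) = fold r 0 := by
  choose x hx_mem hx_val using fun r : ℕ => hf₀ (fold_mem_Icc r ⟨le_rfl, zero_le_one⟩)
  choose p hp_mem hp_val using fun r => exists_gmap_eq hn (k + r) (hx_mem r)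
  refine ⟨p, monotone_nat_of_le_succ fun r => ?_, hp_mem, fun r => by rw [hp_val, hx_val]⟩
  exact (hp_mem r).2.trans (le_of_eq_of_le (by push_cast; ring) (hp_mem (r + 1)).1)

lemma exists_natCast_div_between {n : ℕ} (hn : 0 < n) {a b ℓ : ℝ} (ha : 0 ≤ a)
    (hab : a + (ℓ + 1) / n ≤ b) : ∃ k : ℕ, a ≤ k / n ∧ (k + ℓ) / n ≤ b := by
  have hn' : (0 : ℝ) < n := by exact_mod_cast hn
  refine ⟨⌈a * n⌉₊, (le_div_iff₀ hn').2 (Nat.le_ceil _), ?_⟩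
  have hceil : (⌈a * n⌉₊ : ℝ) / n < a + 1 / n := by
    rw [div_lt_iff₀ hn', add_mul, one_div_mul_cancel hn'.ne']
    exact Nat.ceil_lt_add_one (mul_nonneg ha hn'.le)
  rw [add_div] at hab
  rw [add_div]
  linarith

end Folding

open Folding

theorem folding_lemma_general (m n q : ℕ) (hm : 0 < m)
    (hmnq : (m + 2) * q ≤ n) (i : ℕ) (hi : i < q)
    (f₀ : ℝ → ℝ) (hf₀c : ContinuousOn f₀ (Set.Icc 0 1))
    (hf₀s : f₀ '' Set.Icc 0 1 = Set.Icc 0 1) :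
    ∃ f₁ : ℝ → ℝ, ContinuousOn f₁ (Set.Icc 0 1) ∧
      Set.MapsTo f₁ (Set.Icc 0 1) (Set.Icc 0 1) ∧
      (f₀ 0 = 0 → f₁ 0 = 0) ∧
      (∀ t ∈ Set.Icc (0:ℝ) 1, f₀ (gmap n t) = gmap m (f₁ t)) ∧
      f₁ '' Set.Icc 0 ((i : ℝ) / q) ⊆ Set.Icc 0 (1 / m) ∧
      f₁ '' Set.Icc ((i : ℝ) / q) ((i + 1 : ℝ) / q) = Set.Icc 0 1 ∧
      f₁ '' Set.Icc ((i + 1 : ℝ) / q) 1 ⊆ Set.Icc (((m : ℝ) - 1) / m) 1 := by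
  have hq : (0 : ℝ) < q := by exact_mod_cast i.zero_le.trans_lt hi
  have hn : 0 < n := by nlinarith
  have hi₁ : ((i : ℝ) + 1) / q ≤ 1 := div_le_one_of_le₀ (by exact_mod_cast hi) hq.le
  have hblock : (i : ℝ) / q + (((m + 1 : ℕ) : ℝ) + 1) / n ≤ (i + 1) / q := by
    have : (((m + 1 : ℕ) : ℝ) + 1) / n ≤ 1 / q := by
      rw [div_le_div_iff₀ (by positivity) hq]
      exact_mod_cast (by linarith : (m + 1 + 1) * q ≤ 1 * n)
    rw [add_div (i : ℝ) 1]
    linarith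
  obtain ⟨k, hk₀, hk₁⟩ := exists_natCast_div_between hn (by positivity) hblock
  obtain ⟨p, hp, hp_mem, hp_val⟩ := exists_turning_points hn hf₀s.ge k
  have hp₀ : (i : ℝ) / q ≤ p 0 := hk₀.trans (by simpa using (hp_mem 0).1)
  have hpm : p m ≤ (i + 1) / q := (hp_mem m).2.trans (le_of_eq_of_le (by push_cast; ring) hk₁)
  obtain ⟨f₁, hc, hmaps, h₀, hlift, hleft, hmid, hright⟩ := exists_gmap_lift hm
    (hf₀c.comp (continuous_gmap n).continuousOn fun t _ => vmap_mem_Icc _)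
    (hf₀s ▸ (mapsTo_image f₀ _).comp fun t _ => vmap_mem_Icc _) hp
    ((by positivity : (0 : ℝ) ≤ i / q).trans hp₀) (hpm.trans hi₁) hp_val
  refine ⟨f₁, hc, hmaps, fun h => h₀ (by rwa [Function.comp_apply, gmap_zero]), hlift,
    (image_mono (Icc_subset_Icc_right hp₀)).trans hleft, ?_,
    (image_mono (Icc_subset_Icc_left hpm)).trans hright⟩
  exact (hmaps.mono_left (Icc_subset_Icc (by positivity) hi₁)).image_subset.antisymm
    (hmid ▸ image_mono (Icc_subset_Icc hp₀ hpm))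

theorem folding_lemma (m n q : ℕ) (hm : 0 < m) (hn : 0 < n) (hq : 0 < q)
    (hmnq : (m + 2) * q ≤ n) (i : ℕ) (hi : i < q)
    (f₀ : ℝ → ℝ) (hf₀c : ContinuousOn f₀ (Set.Icc 0 1))
    (hf₀s : f₀ '' Set.Icc 0 1 = Set.Icc 0 1) :
    ∃ f₁ : ℝ → ℝ, ContinuousOn f₁ (Set.Icc 0 1) ∧
      Set.MapsTo f₁ (Set.Icc 0 1) (Set.Icc 0 1) ∧
      (f₀ 0 = 0 → f₁ 0 = 0) ∧
      (∀ t ∈ Set.Icc (0:ℝ) 1, f₀ (gmap n t) = gmap m (f₁ t)) ∧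
      f₁ '' Set.Icc 0 ((i : ℝ) / q) ⊆ Set.Icc 0 (1 / m) ∧
      f₁ '' Set.Icc ((i : ℝ) / q) ((i + 1 : ℝ) / q) = Set.Icc 0 1 ∧
      f₁ '' Set.Icc ((i + 1 : ℝ) / q) 1 ⊆ Set.Icc (((m : ℝ) - 1) / m) 1 :=
  folding_lemma_general m n q hm hmnq i hi f₀ hf₀c hf₀s
end

section
/- Let m and n be positive integers with m + 2 ≤ n, and let f₀ : [0,1] → [0,1] be a continuous surjection. Then there exists a continuous surjection f₁ : [0,1] → [0,1] with f₀ ∘ g_n = g_m ∘ f₁ and f₁(0) = 0 whenever f₀(0) = 0. -/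
open Set

/-!
Since `vmap (m * vmap z) = vmap (m * z)`, the equation `f₀ ∘ g_n = g_m ∘ f₁` holds for
`f₁ t = vmap (G (n t) / m)` whenever `G` lifts `f₀ ∘ vmap` through `vmap`. Such a lift is glued
from the branches `±f₀ ∘ vmap - 2j`, changing branch at points where `f₀ ∘ vmap` takes the
value `0` or `1`. Chosen to descend by `1` per fold, it falls from `f₀ 0 ≥ 0` to `-2⌈m/2⌉ ≤ -m`
before reaching `n ≥ m + 2`, so `f₁` is onto by the intermediate value theorem.
-/

-- `vmap` is the triangle wave `t ↦ dist t (2ℤ)`; this form gives its continuity and symmetries.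
open Real in
lemma vmap_eq_arccos_cos (t : ℝ) : vmap t = arccos (cos (π * t)) / π := by
  have h1 : (⌊t⌋:ℝ) ≤ t := Int.floor_le t
  have h2 : t < ⌊t⌋ + 1 := Int.lt_floor_add_one t
  rcases Int.even_or_odd ⌊t⌋ with ⟨k, hk⟩ | ⟨k, hk⟩
  · have hk' : ((⌊t⌋:ℤ):ℝ) = 2*k := by rw [hk]; push_cast; ring
    have hc : cos (π * t) = cos (π * (t - 2*k)) := by
      have : π * t = π * (t - 2*k) + (k:ℤ) * (2 * π) := by ring
      rw [this, cos_add_int_mul_two_pi]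
    rw [vmap, if_pos ⟨k, hk⟩, hc,
      arccos_cos (by nlinarith [pi_pos]) (by nlinarith [pi_pos]), hk']
    field_simp
  · have hk' : ((⌊t⌋:ℤ):ℝ) = 2*k+1 := by rw [hk]; push_cast; ring
    have hc : cos (π * t) = cos (π * (2*k + 2 - t)) := by
      have : π * (2*k + 2 - t) = -(π * t) + ((k+1 : ℤ)) * (2 * π) := by push_cast; ring
      rw [this, cos_add_int_mul_two_pi, cos_neg]
    rw [vmap, if_neg (Int.not_even_iff_odd.mpr ⟨k, hk⟩), hc,
      arccos_cos (by nlinarith [pi_pos]) (by nlinarith [pi_pos]), hk']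
    field_simp
    ring

@[fun_prop]
lemma continuous_vmap : Continuous vmap := by
  simp only [funext vmap_eq_arccos_cos]
  fun_prop

lemma vmap_mem_Icc (t : ℝ) : vmap t ∈ Icc (0:ℝ) 1 := by
  rw [vmap_eq_arccos_cos]
  exact ⟨div_nonneg (Real.arccos_nonneg _) Real.pi_pos.le,
    (div_le_one Real.pi_pos).2 (Real.arccos_le_pi _)⟩

lemma vmap_of_mem_Icc {t : ℝ} (h : t ∈ Icc (0:ℝ) 1) : vmap t = t := by
  rw [vmap_eq_arccos_cos, Real.arccos_cos (by nlinarith [Real.pi_pos, h.1])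
    (by nlinarith [Real.pi_pos, h.2])]
  field_simp

@[simp]
lemma vmap_zero : vmap 0 = 0 := vmap_of_mem_Icc (left_mem_Icc.2 zero_le_one)

lemma vmap_periodic : Function.Periodic vmap 2 := by
  intro t
  rw [vmap_eq_arccos_cos, vmap_eq_arccos_cos, mul_add, mul_comm Real.pi 2, Real.cos_add_two_pi]

open Real Polynomial.Chebyshev in
/-- Since `cos (π * vmap z) = cos (π * z)`, this is the Chebyshev identity
`T_m (cos θ) = cos (m θ)`. -/
lemma vmap_natCast_mul_vmap (m : ℕ) (z : ℝ) : vmap (m * vmap z) = vmap (m * z) := by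
  have hcos : cos (π * vmap z) = cos (π * z) := by
    rw [vmap_eq_arccos_cos, mul_div_cancel₀ _ pi_ne_zero,
      cos_arccos (neg_one_le_cos _) (cos_le_one _)]
  have key : ∀ y, cos (π * (m * y)) = (T ℝ m).eval (cos (π * y)) := by
    intro y
    rw [T_real_cos]; push_cast; ring_nf
  rw [vmap_eq_arccos_cos (m * vmap z), vmap_eq_arccos_cos (m * z), key, hcos, ← key]

section Glue

variable {α β : Type*} [LinearOrder α]

def glue (a : α) (g h : α → β) (x : α) : β := if x ≤ a then g x else h x

lemma glue_of_le {a x : α} {g h : α → β} (hx : x ≤ a) : glue a g h x = g x := if_pos hx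

lemma glue_of_ge {a x : α} {g h : α → β} (hgh : g a = h a) (hx : a ≤ x) :
    glue a g h x = h x := by
  rcases hx.eq_or_lt with rfl | hx
  · exact (if_pos le_rfl).trans hgh
  · exact if_neg hx.not_ge

lemma glue_eq_or (a : α) (g h : α → β) (x : α) :
    glue a g h x = g x ∨ glue a g h x = h x := by
  unfold glue; split_ifs <;> simp

lemma Continuous.glue [TopologicalSpace α] [OrderClosedTopology α] [TopologicalSpace β]
    {a : α} {g h : α → β} (hg : Continuous g) (hh : Continuous h) (hgh : g a = h a) :
    Continuous (glue a g h) :=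
  hg.if_le hh continuous_id continuous_const fun _ hx => hx ▸ hgh

end Glue

/-- The lift is glued from the branches `-f ∘ vmap - 2j` and `f ∘ vmap - 2j - 2`, switching branch
at `2j + p` (where `f ∘ vmap` vanishes) and at `2j + 2 - r` (where it equals `1`). -/
lemma exists_lift_comp_vmap {f : ℝ → ℝ} {p r : ℝ} (hf : ContinuousOn f (Icc 0 1))
    (hfI : MapsTo f (Icc 0 1) (Icc 0 1)) (hp : p ∈ Icc (0:ℝ) 1) (hr : r ∈ Icc (0:ℝ) 1)
    (hfp : f p = 0) (hfr : f r = 1) (k : ℕ) :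
    ∃ G : ℝ → ℝ, Continuous G ∧ (∀ x, vmap (G x) = f (vmap x)) ∧ G 0 = f 0 ∧
      G (2 * k + p) = -(2 * k) := by
  have hu : Continuous fun x => f (vmap x) := hf.comp_continuous continuous_vmap vmap_mem_Icc
  have hvu : ∀ x, vmap (f (vmap x)) = f (vmap x) :=
    fun x => vmap_of_mem_Icc (hfI (vmap_mem_Icc x))
  have hvp : ∀ j : ℕ, vmap (2 * j + p) = p := fun j => by
    rw [add_comm, mul_comm, vmap_periodic.nat_mul j, vmap_of_mem_Icc hp]
  have hvr : ∀ j : ℕ, vmap (2 * j + 2 - r) = r := fun j => by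
    rw [show (2 * j + 2 - r : ℝ) = -r + (j + 1 : ℕ) * 2 by push_cast; ring,
      vmap_periodic.nat_mul, vmap_neg, vmap_of_mem_Icc hr]
  induction k with
  | zero => exact ⟨_, hu, hvu, by rw [vmap_zero], by simp [vmap_of_mem_Icc hp, hfp]⟩
  | succ k ih =>
    obtain ⟨G, hGc, hGv, hG0, hGk⟩ := ih
    set a : ℝ := 2 * k + p
    set b : ℝ := 2 * k + 2 - r
    have hab : a ≤ b := by linarith [hp.2, hr.2]
    set H₁ : ℝ → ℝ := fun x => -f (vmap x) - 2 * k
    set H₂ : ℝ → ℝ := fun x => f (vmap x) - 2 * k - 2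
    have hH₁ : G a = H₁ a := by simp only [H₁, a, hGk, hvp, hfp]; ring
    have hH₂ : glue a G H₁ b = H₂ b := by
      rw [glue_of_ge hH₁ hab]; simp only [H₁, H₂, b, hvr, hfr]; ring
    refine ⟨glue b (glue a G H₁) H₂, (hGc.glue (hu.neg.sub continuous_const) hH₁).glue
      ((hu.sub continuous_const).sub continuous_const) hH₂,
      fun x => ?_, ?_, ?_⟩
    · rcases glue_eq_or b (glue a G H₁) H₂ x with h | h <;> rw [h]
      · rcases glue_eq_or a G H₁ x with h | h <;> rw [h]
        · exact hGv x
        · rw [show H₁ x = -f (vmap x) - (k : ℕ) * 2 by ring, vmap_periodic.sub_nat_mul_eq,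
            vmap_neg, hvu]
      · rw [show H₂ x = f (vmap x) - (k + 1 : ℕ) * 2 by push_cast; ring,
          vmap_periodic.sub_nat_mul_eq, hvu]
    · rw [glue_of_le (by linarith [hp.1]), glue_of_le (by linarith [hp.1]), hG0]
    · rw [glue_of_ge hH₂ (by push_cast; linarith [hp.1, hr.1])]
      simp only [H₂]
      rw [hvp (k + 1), hfp]; push_cast; ring

lemma image_vmap_div_eq_Icc {φ : ℝ → ℝ} (hφ : ContinuousOn φ (Icc 0 1)) {c : ℝ} (hc : 0 < c)
    (h0 : 0 ≤ φ 0) {s : ℝ} (hs : s ∈ Icc (0:ℝ) 1) (hφs : φ s ≤ -c) :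
    (fun t => vmap (φ t / c)) '' Icc 0 1 = Icc 0 1 := by
  refine Subset.antisymm (image_subset_iff.2 fun t _ => vmap_mem_Icc _) fun y hy => ?_
  have hmem : -(c * y) ∈ Icc (φ s) (φ 0) :=
    ⟨by nlinarith [hy.2], by nlinarith [hy.1]⟩
  obtain ⟨t, ht, hφt⟩ :=
    intermediate_value_Icc' hs.1 (hφ.mono (Icc_subset_Icc le_rfl hs.2)) hmem
  refine ⟨t, ⟨ht.1, ht.2.trans hs.2⟩, ?_⟩
  dsimp only
  rw [hφt, neg_div, mul_div_cancel_left₀ _ hc.ne', vmap_neg, vmap_of_mem_Icc hy]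

theorem folding_lemma_q_one_general (m n : ℕ) (hm : 0 < m) (hmn : m + 2 ≤ n)
    (f₀ : ℝ → ℝ) (hf₀c : ContinuousOn f₀ (Set.Icc 0 1))
    (hf₀s : f₀ '' Set.Icc 0 1 = Set.Icc 0 1) :
    ∃ f₁ : ℝ → ℝ, ContinuousOn f₁ (Set.Icc 0 1) ∧
      f₁ '' Set.Icc 0 1 = Set.Icc 0 1 ∧
      (∀ t ∈ Set.Icc (0:ℝ) 1, f₀ (gmap n t) = gmap m (f₁ t)) ∧
      (f₀ 0 = 0 → f₁ 0 = 0) := by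
  have hmR : (0:ℝ) < m := by exact_mod_cast hm
  have hmnR : (m:ℝ) + 2 ≤ n := by exact_mod_cast hmn
  have hf₀I : MapsTo f₀ (Icc 0 1) (Icc 0 1) := fun x hx => hf₀s ▸ mem_image_of_mem f₀ hx
  obtain ⟨p, hp, hfp⟩ : (0:ℝ) ∈ f₀ '' Icc 0 1 := by
    rw [hf₀s]; exact left_mem_Icc.2 zero_le_one
  obtain ⟨r, hr, hfr⟩ : (1:ℝ) ∈ f₀ '' Icc 0 1 := by
    rw [hf₀s]; exact right_mem_Icc.2 zero_le_one
  obtain ⟨k, hmk, hkm⟩ : ∃ k : ℕ, m ≤ 2 * k ∧ 2 * k ≤ m + 1 := ⟨(m + 1) / 2, by omega, by omega⟩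
  have hmkR : (m:ℝ) ≤ 2 * k := by exact_mod_cast hmk
  have hkmR : 2 * (k:ℝ) ≤ m + 1 := by exact_mod_cast hkm
  obtain ⟨G, hGc, hGv, hG0, hGk⟩ := exists_lift_comp_vmap hf₀c hf₀I hp hr hfp hfr k
  refine ⟨fun t => vmap (G (n * t) / m), by fun_prop, ?_, fun t _ => ?_, fun h => ?_⟩
  · refine image_vmap_div_eq_Icc (by fun_prop) hmR ?_ (s := (2 * k + p) / n)
      ⟨by have := hp.1; positivity, (div_le_one (by linarith)).2 (by linarith [hp.2])⟩ ?_
    · simpa [hG0] using (hf₀I (left_mem_Icc.2 zero_le_one)).1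
    · rw [mul_div_cancel₀ _ (by linarith), hGk]; linarith
  · rw [gmap, gmap, vmap_natCast_mul_vmap, mul_div_cancel₀ _ hmR.ne', hGv]
  · simp [hG0, h]

theorem folding_lemma_q_one (m n : ℕ) (hm : 0 < m) (hn : 0 < n) (hmn : m + 2 ≤ n)
    (f₀ : ℝ → ℝ) (hf₀c : ContinuousOn f₀ (Set.Icc 0 1))
    (hf₀s : f₀ '' Set.Icc 0 1 = Set.Icc 0 1) :
    ∃ f₁ : ℝ → ℝ, ContinuousOn f₁ (Set.Icc 0 1) ∧
      f₁ '' Set.Icc 0 1 = Set.Icc 0 1 ∧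
      (∀ t ∈ Set.Icc (0:ℝ) 1, f₀ (gmap n t) = gmap m (f₁ t)) ∧
      (f₀ 0 = 0 → f₁ 0 = 0) :=
  folding_lemma_q_one_general m n hm hmn f₀ hf₀c hf₀s
end
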